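/- arXiv:2202.05746 — 2 statements merged into one kernel-verified Lean document; each statement's English description precedes it below -/
import Mathlib

section
/- Let Q be a finite type with a colouring c : Q → Bool, and for a finset s ⊆ Q let g(s) = N_w(s) − N_b(s) ∈ ℤ. If α₁, α₂, β ⊆ Q are finsets such that I^{g(α₁∩β)} = 1, I^{g(α₂∩β)} = 1, and |α₁∩α₂∩β| is odd, then I^{g((α₁ Δ α₂)∩β)} = −1. -/
/-- Number of white elements of a finset. -/
def Nw {Q : Type*} (c : Q → Bool) (s : Finset Q) : ℕ :=
  (s.filter (fun q => c q = true)).card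

/-- Number of black elements of a finset. -/
def Nb {Q : Type*} (c : Q → Bool) (s : Finset Q) : ℕ :=
  (s.filter (fun q => c q = false)).card

/-- g(s) = N_w(s) − N_b(s). -/
def gdiff {Q : Type*} (c : Q → Bool) (s : Finset Q) : ℤ :=
  (Nw c s : ℤ) - (Nb c s : ℤ)

lemma filter_symmDiff' {Q : Type*} [DecidableEq Q] (p : Q → Prop) [DecidablePred p]
    (s t : Finset Q) : (symmDiff s t).filter p = symmDiff (s.filter p) (t.filter p) := by
  ext x
  simp [Finset.mem_symmDiff, Finset.mem_filter]
  tauto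

lemma card_symmDiff' {Q : Type*} [DecidableEq Q] (s t : Finset Q) :
    ((symmDiff s t).card : ℤ) = s.card + t.card - 2 * (s ∩ t).card := by
  have hd : Disjoint (s \ t) (t \ s) := disjoint_sdiff_sdiff
  have h1 : (s \ t).card + (s ∩ t).card = s.card := Finset.card_sdiff_add_card_inter s t
  have h2 : (t \ s).card + (t ∩ s).card = t.card := Finset.card_sdiff_add_card_inter t s
  have : (symmDiff s t).card = (s \ t).card + (t \ s).card := by
    rw [symmDiff_def]; exact Finset.card_union_of_disjoint hd
  rw [Finset.inter_comm] at h2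
  omega

lemma gdiff_symmDiff {Q : Type*} [DecidableEq Q] (c : Q → Bool) (s t : Finset Q) :
    gdiff c (symmDiff s t) = gdiff c s + gdiff c t - 2 * gdiff c (s ∩ t) := by
  unfold gdiff Nw Nb
  rw [filter_symmDiff', filter_symmDiff', card_symmDiff', card_symmDiff',
    ← Finset.filter_inter_distrib, ← Finset.filter_inter_distrib]
  ring

lemma gdiff_odd {Q : Type*} [DecidableEq Q] (c : Q → Bool) (s : Finset Q)
    (h : Odd s.card) : Odd (gdiff c s) := by
  have hsum : Nw c s + Nb c s = s.card := by
    unfold Nw Nb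
    have h0 := Finset.card_filter_add_card_filter_not (s := s)
      (p := fun q => c q = true)
    have he : (s.filter (fun q => ¬ c q = true)).card
        = (s.filter (fun q => c q = false)).card := by
      congr 1; exact Finset.filter_congr (by simp)
    omega
  rcases h with ⟨k, hk⟩
  unfold gdiff
  exact ⟨k - (Nb c s : ℤ), by omega⟩

theorem stmt_3 {Q : Type*} [Fintype Q] [DecidableEq Q] (c : Q → Bool)
    (α₁ α₂ β : Finset Q)
    (h₁ : Complex.I ^ (gdiff c (α₁ ∩ β)) = 1)
    (h₂ : Complex.I ^ (gdiff c (α₂ ∩ β)) = 1)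
    (hodd : Odd ((α₁ ∩ α₂ ∩ β).card)) :
    Complex.I ^ (gdiff c ((symmDiff α₁ α₂) ∩ β)) = -1 := by
  have hI : Complex.I ≠ 0 := Complex.I_ne_zero
  have hset : (symmDiff α₁ α₂) ∩ β = symmDiff (α₁ ∩ β) (α₂ ∩ β) := by
    ext x; simp [Finset.mem_symmDiff]; tauto
  have hset2 : (α₁ ∩ β) ∩ (α₂ ∩ β) = α₁ ∩ α₂ ∩ β := by
    ext x; simp only [Finset.mem_inter]; tauto
  rw [hset, gdiff_symmDiff, hset2]
  rcases gdiff_odd c _ hodd with ⟨k, hk⟩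
  rw [hk]
  rw [show gdiff c (α₁ ∩ β) + gdiff c (α₂ ∩ β) - 2 * (2 * k + 1) =
    gdiff c (α₁ ∩ β) + (gdiff c (α₂ ∩ β) + ((4 * (-k)) + (-2))) by ring]
  have h4 : Complex.I ^ ((4:ℤ) * (-k)) = 1 := by
    rw [zpow_mul, show (4:ℤ) = ((4:ℕ):ℤ) from rfl, zpow_natCast, Complex.I_pow_four, one_zpow]
  rw [zpow_add₀ hI, zpow_add₀ hI, zpow_add₀ hI, h₁, h₂, h4, one_mul, one_mul, one_mul]
  rw [zpow_neg, show (2:ℤ) = ((2:ℕ):ℤ) from rfl, zpow_natCast, Complex.I_sq]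
  norm_num
end

section
/- Let Q be a finite type with a colouring c : Q → Bool, g(s) = N_w(s) − N_b(s) for finsets s ⊆ Q, α ⊆ Q a finset, and G a finite set of finsets of Q containing ∅ and closed under symmetric difference. Define v : (Q → ZMod 2) → ℂ by v = Σ_{B ∈ G} I^{g(α∩B)} · δ_{χ_B}. If β ∈ G is such that there exists B ∈ G with |α∩β∩B| odd, then Σ_x conj(v(x)) · v(x + χ_β) = 0; that is, v is orthogonal to its translate by χ_β, so measuring the stabiliser X_β on v returns ±1 with equal probability. -/
/-- Indicator bit string of a finset. -/
def chi {Q : Type*} [DecidableEq Q] (s : Finset Q) : Q → ZMod 2 :=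
  fun q => if q ∈ s then 1 else 0

/-- The state A_α|0̄⟩ obtained by applying the S/S† error pattern on α to the
colour-code codestate with X stabiliser group G:
v = Σ_{B ∈ G} I^{g(α∩B)} δ_{χ_B}. -/
noncomputable def sState {Q : Type*} [DecidableEq Q] [Fintype Q] (c : Q → Bool)
    (α : Finset Q) (G : Finset (Finset Q)) : (Q → ZMod 2) → ℂ :=
  fun x => ∑ B ∈ G,
    Complex.I ^ (gdiff c (α ∩ B)) * (if x = chi B then 1 else 0)

section helpers
variable {Q : Type*} [DecidableEq Q]

lemma chi_injective : Function.Injective (chi (Q := Q)) := by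
  intro A B h
  ext q
  have := congrFun h q
  by_cases hA : q ∈ A <;> by_cases hB : q ∈ B <;> simp [chi, hA, hB] at this ⊢

lemma chi_add (A B : Finset Q) : chi A + chi B = chi (symmDiff A B) := by
  funext q
  by_cases hA : q ∈ A <;> by_cases hB : q ∈ B <;>
    simp [chi, Finset.mem_symmDiff, hA, hB] <;> decide

/-- signed sum -/
def gsum (c : Q → Bool) (s : Finset Q) : ℤ :=
  ∑ q ∈ s, (if c q then (1:ℤ) else -1)

lemma gdiff_eq_gsum (c : Q → Bool) (s : Finset Q) : gdiff c s = gsum c s := by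
  unfold gdiff gsum Nw Nb
  rw [← Finset.sum_filter_add_sum_filter_not s (fun q => c q = true)]
  rw [Finset.sum_ite_of_true (fun q hq => by simpa using (Finset.mem_filter.mp hq).2),
      Finset.sum_ite_of_false (fun q hq => by simpa using (Finset.mem_filter.mp hq).2)]
  have h : s.filter (fun q => ¬ (c q = true)) = s.filter (fun q => c q = false) := by
    apply Finset.filter_congr; intro q _; simp
  rw [h]
  simp [mul_comm]
  ring

lemma card_symmDiff_add (A B : Finset Q) :
    (symmDiff A B).card + 2 * (A ∩ B).card = A.card + B.card := by
  have h1 : (A ∩ B).card + (A ∪ B).card = A.card + B.card :=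
    Finset.card_inter_add_card_union A B
  have h2 : (symmDiff A B).card = (A ∪ B).card - (A ∩ B).card := by
    rw [symmDiff_eq_sup_sdiff_inf]
    exact Finset.card_sdiff_of_subset Finset.inter_subset_union
  have h3 : (A ∩ B).card ≤ (A ∪ B).card :=
    Finset.card_le_card Finset.inter_subset_union
  omega

lemma gsum_symmDiff (c : Q → Bool) (A B : Finset Q) :
    gsum c (symmDiff A B) = gsum c A + gsum c B - 2 * gsum c (A ∩ B) := by
  have h1 : gsum c (A ∪ B) + gsum c (A ∩ B) = gsum c A + gsum c B :=
    Finset.sum_union_inter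
  have h2 : gsum c (symmDiff A B) + gsum c (A ∩ B) = gsum c (A ∪ B) := by
    unfold gsum
    rw [symmDiff_eq_sup_sdiff_inf]
    exact Finset.sum_sdiff Finset.inter_subset_union
  linarith

lemma gsum_eq_card_sub (c : Q → Bool) (s : Finset Q) :
    gsum c s = (s.card : ℤ) - 2 * (Nb c s : ℤ) := by
  have h := Finset.card_filter_add_card_filter_not
    (s := s) (p := fun q => c q = true)
  have hnb : Nb c s = (s.filter (fun q => ¬ (c q = true))).card := by
    unfold Nb; congr 1; apply Finset.filter_congr; intro q _; simp
  rw [← gdiff_eq_gsum]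
  unfold gdiff Nw
  rw [hnb]
  omega

end helpers

section evalhelpers
variable {Q : Type*} [DecidableEq Q] [Fintype Q]

lemma sState_chi (c : Q → Bool) (α : Finset Q) (G : Finset (Finset Q))
    {B : Finset Q} (hB : B ∈ G) :
    sState c α G (chi B) = Complex.I ^ (gdiff c (α ∩ B)) := by
  unfold sState
  rw [Finset.sum_eq_single_of_mem B hB]
  · simp
  · intro B' _ hne
    have : chi B ≠ chi B' := fun h => hne (chi_injective h).symm
    simp [this]

lemma conj_I_zpow (a : ℤ) :
    (starRingEnd ℂ) (Complex.I ^ a) = Complex.I ^ (-a) := by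
  rw [map_zpow₀, Complex.conj_I, ← Complex.inv_I, inv_zpow, ← zpow_neg]

lemma I_zpow_two_mul (m : ℤ) : Complex.I ^ (2 * m) = ((-1 : ℂ)) ^ m := by
  rw [zpow_mul]
  norm_num [zpow_two]

end evalhelpers

theorem stmt_9 {Q : Type*} [DecidableEq Q] [Fintype Q] (c : Q → Bool)
    (α : Finset Q) (G : Finset (Finset Q))
    (h_empty : ∅ ∈ G) (h_closed : ∀ A ∈ G, ∀ B ∈ G, symmDiff A B ∈ G)
    (β : Finset Q) (hβ : β ∈ G)
    (hodd : ∃ B ∈ G, Odd ((α ∩ β ∩ B).card)) :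
    ∑ x : Q → ZMod 2,
      (starRingEnd ℂ) (sState c α G x) * sState c α G (x + chi β) = 0 := by
  classical
  obtain ⟨B₀, hB₀, hB₀odd⟩ := hodd
  -- Step 1: reduce the sum over x to a sum over B ∈ G
  have step1 : (∑ x : Q → ZMod 2,
      (starRingEnd ℂ) (sState c α G x) * sState c α G (x + chi β))
      = ∑ B ∈ G, (starRingEnd ℂ) (Complex.I ^ (gdiff c (α ∩ B))) *
          sState c α G (chi B + chi β) := by
    have expand : ∀ x : Q → ZMod 2,
        (starRingEnd ℂ) (sState c α G x) * sState c α G (x + chi β)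
        = ∑ B ∈ G, (if x = chi B then
            (starRingEnd ℂ) (Complex.I ^ (gdiff c (α ∩ B))) *
              sState c α G (x + chi β) else 0) := by
      intro x
      conv_lhs => rw [show sState c α G x = ∑ B ∈ G,
        Complex.I ^ (gdiff c (α ∩ B)) * (if x = chi B then 1 else 0) from rfl]
      rw [map_sum, Finset.sum_mul]
      refine Finset.sum_congr rfl fun B _ => ?_
      split_ifs with h
      · simp [h]
      · simp [h]
    rw [Finset.sum_congr rfl fun x _ => expand x, Finset.sum_comm]
    refine Finset.sum_congr rfl fun B _ => ?_
    rw [Finset.sum_ite_eq' Finset.univ (chi B)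
      (fun x => (starRingEnd ℂ) (Complex.I ^ (gdiff c (α ∩ B))) *
        sState c α G (x + chi β))]
    simp
  rw [step1]
  -- Step 2: termwise evaluation
  have step2 : ∀ B ∈ G,
      (starRingEnd ℂ) (Complex.I ^ (gdiff c (α ∩ B))) *
          sState c α G (chi B + chi β)
      = Complex.I ^ (gdiff c (α ∩ β)) * ((-1 : ℂ)) ^ ((α ∩ β ∩ B).card) := by
    intro B hB
    rw [chi_add, sState_chi c α G (h_closed B hB β hβ), conj_I_zpow,
      mul_comm, ← zpow_add₀ Complex.I_ne_zero]
    have hset : α ∩ symmDiff B β = symmDiff (α ∩ B) (α ∩ β) :=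
      inf_symmDiff_distrib_left α B β
    have hset2 : (α ∩ B) ∩ (α ∩ β) = α ∩ β ∩ B := by
      ext q; simp only [Finset.mem_inter]; tauto
    have hexp : gdiff c (α ∩ symmDiff B β) + -gdiff c (α ∩ B)
        = gdiff c (α ∩ β) + 2 * (2 * (Nb c (α ∩ β ∩ B) : ℤ) - ((α ∩ β ∩ B).card : ℤ)) := by
      simp only [gdiff_eq_gsum]
      rw [hset, gsum_symmDiff, hset2]
      simp only [gsum_eq_card_sub]
      ring
    rw [hexp, zpow_add₀ Complex.I_ne_zero, I_zpow_two_mul]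
    congr 1
    rcases Nat.even_or_odd (α ∩ β ∩ B).card with he | ho
    · rw [he.neg_one_pow]
      have : Even (2 * (Nb c (α ∩ β ∩ B) : ℤ) - ((α ∩ β ∩ B).card : ℤ)) := by
        rcases he with ⟨k, hk⟩
        exact ⟨(Nb c (α ∩ β ∩ B) : ℤ) - k, by omega⟩
      rw [this.neg_one_zpow]
    · rw [ho.neg_one_pow]
      have : Odd (2 * (Nb c (α ∩ β ∩ B) : ℤ) - ((α ∩ β ∩ B).card : ℤ)) := by
        rcases ho with ⟨k, hk⟩
        exact ⟨(Nb c (α ∩ β ∩ B) : ℤ) - k - 1, by omega⟩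
      rw [this.neg_one_zpow]
  rw [Finset.sum_congr rfl step2, ← Finset.mul_sum]
  -- Step 3: the character sum vanishes
  have hpar : ∀ B : Finset Q,
      ((-1 : ℂ)) ^ ((α ∩ β ∩ symmDiff B B₀).card)
      = -((-1 : ℂ)) ^ ((α ∩ β ∩ B).card) := by
    intro B
    have hs : α ∩ β ∩ symmDiff B B₀ = symmDiff (α ∩ β ∩ B) (α ∩ β ∩ B₀) :=
      inf_symmDiff_distrib_left (α ∩ β) B B₀
    have hc : (symmDiff (α ∩ β ∩ B) (α ∩ β ∩ B₀)).card
        + 2 * ((α ∩ β ∩ B) ∩ (α ∩ β ∩ B₀)).card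
        = (α ∩ β ∩ B).card + (α ∩ β ∩ B₀).card := card_symmDiff_add _ _
    have : ((-1 : ℂ)) ^ ((symmDiff (α ∩ β ∩ B) (α ∩ β ∩ B₀)).card
        + 2 * ((α ∩ β ∩ B) ∩ (α ∩ β ∩ B₀)).card)
        = ((-1 : ℂ)) ^ ((α ∩ β ∩ B).card + (α ∩ β ∩ B₀).card) := by rw [hc]
    rw [pow_add, pow_mul, pow_add, hB₀odd.neg_one_pow] at this
    simp only [neg_one_sq, one_pow, mul_one] at this
    rw [hs, this]
    ring
  have hmem : ∀ B : Finset Q, B ∈ G ↔ symmDiff B B₀ ∈ G := by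
    intro B
    constructor
    · intro h; exact h_closed B h B₀ hB₀
    · intro h
      have := h_closed _ h B₀ hB₀
      rwa [symmDiff_symmDiff_cancel_right] at this
  have hsum : (∑ B ∈ G, ((-1 : ℂ)) ^ ((α ∩ β ∩ B).card))
      = -∑ B ∈ G, ((-1 : ℂ)) ^ ((α ∩ β ∩ B).card) := by
    conv_lhs => rw [show (∑ B ∈ G, ((-1 : ℂ)) ^ ((α ∩ β ∩ B).card))
      = ∑ B ∈ G, ((-1 : ℂ)) ^ ((α ∩ β ∩ symmDiff B B₀).card) from
        Finset.sum_nbij' (fun B => symmDiff B B₀) (fun B => symmDiff B B₀)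
          (fun B hB => (hmem B).mp hB) (fun B hB => (hmem B).mp hB)
          (fun B _ => show symmDiff (symmDiff B B₀) B₀ = B by rw [symmDiff_symmDiff_cancel_right])
          (fun B _ => show symmDiff (symmDiff B B₀) B₀ = B by rw [symmDiff_symmDiff_cancel_right])
          (fun B _ => by simp only [symmDiff_symmDiff_cancel_right])]
    rw [← Finset.sum_neg_distrib]
    exact Finset.sum_congr rfl fun B _ => hpar B
  have : (∑ B ∈ G, ((-1 : ℂ)) ^ ((α ∩ β ∩ B).card)) = 0 := by
    have h2 : (∑ B ∈ G, ((-1 : ℂ)) ^ ((α ∩ β ∩ B).card))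
        + (∑ B ∈ G, ((-1 : ℂ)) ^ ((α ∩ β ∩ B).card)) = 0 := by
      nth_rewrite 1 [hsum]; ring
    exact add_self_eq_zero.mp h2
  rw [this, mul_zero]
end
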